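/- Assume g ∈ L^p(π) for some p > 2, ∫ g dπ = 0, and Condition (C) holds with some α ∈ (0, 1/2). Then for π-almost every x ∈ 𝒳, n^{-1/2} max_{1 ≤ k ≤ n} |T_k(g, Q)(x)| converges to 0 as n → ∞. (Equivalently, since E_x(S_k(g)) = T_k(g,Q)(x), n^{-1/2} max_{k ≤ n} |E_x(S_k(g))| → 0 for π-a.e. x.) -/

import Mathlib

/-!
Cut `T_k(g, Q)(x)`, `k ≤ 2^m`, along the binary expansion of `k` into dyadic blocks
`Σ_{j 2^l ≤ i < (j+1) 2^l} Q^i g`, `l ≤ m`. If every block of level `l` is below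
`ε 2^{m/2} ρ^{m-l}` for some `ρ < 1`, then `|T_k(x)| = O(ε 2^{m/2})` for all `k ≤ 2^m`.
Invariance of `π` makes `Q` a contraction of every `Lᵖ(π)`, so a block of length `2^l` has
`Lᵖ`-norm at most `2^l ‖g‖_p`, and `L²`-norm at most `C 2^{αl}` by condition (C). Chebyshev's
inequality in `Lᵖ` for short blocks and in `L²` for long ones bounds the probability that some
block of scale `m` is too large by a summable sequence, and Borel–Cantelli finishes the proof.
-/

open MeasureTheory ProbabilityTheory Filter
open scoped ENNReal NNReal

noncomputable section

/-- The Markov transition operator: `Qh(x) = ∫ h(y) Q(x; dy)`. -/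
def kerOp {𝒳 : Type*} [MeasurableSpace 𝒳] {E : Type*} [NormedAddCommGroup E]
    [NormedSpace ℝ E] (Q : Kernel 𝒳 𝒳) (h : 𝒳 → E) : 𝒳 → E :=
  fun x => ∫ y, h y ∂(Q x)

/-- `T_n(g, Q) = ∑_{k=0}^{n-1} Q^k g`. -/
def Tres {𝒳 : Type*} [MeasurableSpace 𝒳] {E : Type*} [NormedAddCommGroup E]
    [NormedSpace ℝ E] (Q : Kernel 𝒳 𝒳) (g : 𝒳 → E) (n : ℕ) : 𝒳 → E :=
  fun x => ∑ k ∈ Finset.range n, (kerOp Q)^[k] g x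

section MarkovOperator

variable {𝒳 : Type*} [MeasurableSpace 𝒳] {E : Type*} [NormedAddCommGroup E]
  [NormedSpace ℝ E] {Q : Kernel 𝒳 𝒳} {π : Measure 𝒳}

theorem tres_add (g : 𝒳 → E) (a n : ℕ) (x : 𝒳) :
    Tres Q g (a + n) x = Tres Q g a x + Tres Q ((kerOp Q)^[a] g) n x := by
  simp only [Tres, Finset.sum_range_add, ← Function.iterate_add_apply, add_comm]

theorem MeasureTheory.StronglyMeasurable.kerOp [IsSFiniteKernel Q] {f : 𝒳 → E}
    (hf : StronglyMeasurable f) : StronglyMeasurable (_root_.kerOp Q f) :=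
  (hf.comp_measurable measurable_snd).integral_kernel_prod_right'

theorem MeasureTheory.StronglyMeasurable.iterate_kerOp [IsSFiniteKernel Q] {f : 𝒳 → E}
    (hf : StronglyMeasurable f) (k : ℕ) : StronglyMeasurable ((_root_.kerOp Q)^[k] f) := by
  induction k with
  | zero => exact hf
  | succ k ih => rw [Function.iterate_succ_apply']; exact ih.kerOp

theorem MeasureTheory.StronglyMeasurable.tres [IsSFiniteKernel Q] {f : 𝒳 → E}
    (hf : StronglyMeasurable f) (n : ℕ) : StronglyMeasurable (Tres Q f n) :=
  Finset.stronglyMeasurable_fun_sum _ fun k _ => hf.iterate_kerOp k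

theorem kerOp_congr_ae (hinv : Kernel.Invariant Q π) {f h : 𝒳 → E} (hfh : f =ᵐ[π] h) :
    kerOp Q f =ᵐ[π] kerOp Q h := by
  rw [← hinv] at hfh
  filter_upwards [Measure.ae_ae_of_ae_comp hfh] with x hx
  exact integral_congr_ae hx

variable [IsMarkovKernel Q]

theorem eLpNorm_kerOp_le (hinv : Kernel.Invariant Q π) {f : 𝒳 → E} (hf : StronglyMeasurable f)
    {q : ℝ≥0∞} (hq : 1 ≤ q) (hq_top : q ≠ ∞) :
    eLpNorm (kerOp Q f) q π ≤ eLpNorm f q π := by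
  have hq0 : q ≠ 0 := (zero_lt_one.trans_le hq).ne'
  have hqr : 0 < q.toReal := ENNReal.toReal_pos hq0 hq_top
  rw [eLpNorm_eq_lintegral_rpow_enorm_toReal hq0 hq_top,
    eLpNorm_eq_lintegral_rpow_enorm_toReal hq0 hq_top]
  refine ENNReal.rpow_le_rpow ?_ (by positivity)
  calc ∫⁻ x, ‖kerOp Q f x‖ₑ ^ q.toReal ∂π
      ≤ ∫⁻ x, ∫⁻ y, ‖f y‖ₑ ^ q.toReal ∂(Q x) ∂π := by
        refine lintegral_mono fun x => ?_
        have hjensen : ‖kerOp Q f x‖ₑ ≤ eLpNorm f q (Q x) :=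
          ((enorm_integral_le_lintegral_enorm _).trans_eq eLpNorm_one_eq_lintegral_enorm.symm).trans
            (eLpNorm_le_eLpNorm_of_exponent_le hq hf.aestronglyMeasurable)
        calc ‖kerOp Q f x‖ₑ ^ q.toReal ≤ eLpNorm f q (Q x) ^ q.toReal := by gcongr
          _ = ∫⁻ y, ‖f y‖ₑ ^ q.toReal ∂(Q x) := by
            rw [eLpNorm_eq_lintegral_rpow_enorm_toReal hq0 hq_top, ← ENNReal.rpow_mul,
              one_div_mul_cancel hqr.ne', ENNReal.rpow_one]
    _ = ∫⁻ y, ‖f y‖ₑ ^ q.toReal ∂π := by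
        conv_rhs => rw [← hinv.def]
        exact (Measure.lintegral_bind Q.aemeasurable (hf.enorm.pow_const _).aemeasurable).symm

theorem eLpNorm_iterate_kerOp_le (hinv : Kernel.Invariant Q π) {f : 𝒳 → E}
    (hf : StronglyMeasurable f) {q : ℝ≥0∞} (hq : 1 ≤ q) (hq_top : q ≠ ∞) (k : ℕ) :
    eLpNorm ((kerOp Q)^[k] f) q π ≤ eLpNorm f q π := by
  induction k with
  | zero => exact le_rfl
  | succ k ih =>
    rw [Function.iterate_succ_apply']
    exact (eLpNorm_kerOp_le hinv (hf.iterate_kerOp k) hq hq_top).trans ih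

theorem eLpNorm_tres_le (hinv : Kernel.Invariant Q π) {f : 𝒳 → E} (hf : StronglyMeasurable f)
    {q : ℝ≥0∞} (hq : 1 ≤ q) (hq_top : q ≠ ∞) (n : ℕ) :
    eLpNorm (Tres Q f n) q π ≤ n * eLpNorm f q π := by
  calc eLpNorm (Tres Q f n) q π
      = eLpNorm (∑ k ∈ Finset.range n, (kerOp Q)^[k] f) q π := by
        congr 1; ext x; simp [Tres]
    _ ≤ ∑ k ∈ Finset.range n, eLpNorm ((kerOp Q)^[k] f) q π :=
        eLpNorm_sum_le (fun k _ => (hf.iterate_kerOp k).aestronglyMeasurable) hq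
    _ ≤ ∑ _k ∈ Finset.range n, eLpNorm f q π :=
        Finset.sum_le_sum fun k _ => eLpNorm_iterate_kerOp_le hinv hf hq hq_top k
    _ = n * eLpNorm f q π := by simp

theorem integrable_iterate_kerOp (hinv : Kernel.Invariant Q π) {f : 𝒳 → E}
    (hf : StronglyMeasurable f) (hfi : Integrable f π) (k : ℕ) :
    Integrable ((kerOp Q)^[k] f) π := by
  rw [← memLp_one_iff_integrable] at hfi ⊢
  exact ⟨(hf.iterate_kerOp k).aestronglyMeasurable,
    (eLpNorm_iterate_kerOp_le hinv hf le_rfl ENNReal.one_ne_top k).trans_lt hfi.2⟩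

theorem kerOp_tres_ae (hinv : Kernel.Invariant Q π) {f : 𝒳 → E} (hf : StronglyMeasurable f)
    (hfi : Integrable f π) (n : ℕ) :
    kerOp Q (Tres Q f n) =ᵐ[π] Tres Q (kerOp Q f) n := by
  have hint : ∀ k, ∀ᵐ x ∂π, Integrable ((kerOp Q)^[k] f) (Q x) := fun k =>
    Measure.ae_integrable_of_integrable_comp (hinv.symm ▸ integrable_iterate_kerOp hinv hf hfi k)
  filter_upwards [ae_all_iff.2 hint] with x hx
  simp only [kerOp, Tres]
  rw [integral_finsetSum _ fun k _ => hx k]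
  refine Finset.sum_congr rfl fun k _ => ?_
  rw [← Function.iterate_succ_apply, Function.iterate_succ_apply']
  rfl

theorem iterate_kerOp_tres_ae (hinv : Kernel.Invariant Q π) {f : 𝒳 → E}
    (hf : StronglyMeasurable f) (hfi : Integrable f π) (a n : ℕ) :
    (kerOp Q)^[a] (Tres Q f n) =ᵐ[π] Tres Q ((kerOp Q)^[a] f) n := by
  induction a with
  | zero => rfl
  | succ a ih =>
    simp only [Function.iterate_succ_apply']
    exact (kerOp_congr_ae hinv ih).trans
      (kerOp_tres_ae hinv (hf.iterate_kerOp a) (integrable_iterate_kerOp hinv hf hfi a) n)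

theorem eLpNorm_tres_iterate_kerOp_le_mul (hinv : Kernel.Invariant Q π) {f : 𝒳 → E}
    (hf : StronglyMeasurable f) {q : ℝ≥0∞} (hq : 1 ≤ q) (hq_top : q ≠ ∞) (a n : ℕ) :
    eLpNorm (Tres Q ((kerOp Q)^[a] f) n) q π ≤ n * eLpNorm f q π :=
  (eLpNorm_tres_le hinv (hf.iterate_kerOp a) hq hq_top n).trans
    (mul_le_mul_right (eLpNorm_iterate_kerOp_le hinv hf hq hq_top a) _)

theorem eLpNorm_tres_iterate_kerOp_le (hinv : Kernel.Invariant Q π) {f : 𝒳 → E}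
    (hf : StronglyMeasurable f) (hfi : Integrable f π) {q : ℝ≥0∞} (hq : 1 ≤ q)
    (hq_top : q ≠ ∞) (a n : ℕ) :
    eLpNorm (Tres Q ((kerOp Q)^[a] f) n) q π ≤ eLpNorm (Tres Q f n) q π := by
  rw [← eLpNorm_congr_ae (iterate_kerOp_tres_ae hinv hf hfi a n)]
  exact eLpNorm_iterate_kerOp_le hinv (hf.tres n) hq hq_top a

end MarkovOperator

theorem norm_le_sum_of_norm_dyadic_increment_le {E : Type*} [SeminormedAddCommGroup E]
    (m : ℕ) {S : ℕ → E} (hS : S 0 = 0) {t : ℕ → ℝ}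
    (h : ∀ l ≤ m, ∀ j < 2 ^ (m - l), ‖S ((j + 1) * 2 ^ l) - S (j * 2 ^ l)‖ ≤ t l) :
    ∀ k ≤ 2 ^ m, ‖S k‖ ≤ ∑ l ∈ Finset.range (m + 1), t l := by
  induction m generalizing S t with
  | zero =>
    have h₀ : ‖S 1‖ ≤ t 0 := by simpa [hS] using h 0 le_rfl 0 one_pos
    intro k hk
    interval_cases k <;> simp [hS, h₀, (norm_nonneg _).trans h₀]
  | succ m ih =>
    -- The even-indexed subsequence satisfies the hypothesis at scale `m`, one level up.
    have heven : ∀ i ≤ 2 ^ m, ‖S (2 * i)‖ ≤ ∑ l ∈ Finset.range (m + 1), t (l + 1) := by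
      refine ih (S := fun i => S (2 * i)) hS fun l hl j hj => ?_
      have := h (l + 1) (by omega) j (by simpa using hj)
      simpa only [pow_succ, mul_left_comm 2, ← mul_assoc, mul_comm _ 2] using this
    intro k hk
    rw [Finset.sum_range_succ']
    obtain ⟨i, rfl | rfl⟩ := Nat.even_or_odd' k
    · have ht₀ : 0 ≤ t 0 := (norm_nonneg _).trans (h 0 (Nat.zero_le _) 0 (Nat.two_pow_pos _))
      linarith [heven i (by omega)]
    · calc ‖S (2 * i + 1)‖ ≤ ‖S (2 * i)‖ + ‖S (2 * i + 1) - S (2 * i)‖ :=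
            norm_le_norm_add_norm_sub' _ _
        _ ≤ _ := add_le_add (heven i (by omega))
            (by simpa using h 0 (by omega) (2 * i) (by rw [Nat.sub_zero, pow_succ]; omega))

theorem tendsto_rpow_neg_half_mul_sup_nnnorm_of_dyadic {E : Type*} [SeminormedAddCommGroup E]
    {S : ℕ → E}
    (h : ∀ ε > 0, ∀ᶠ m : ℕ in atTop, ∀ k ≤ 2 ^ m, ‖S k‖ ≤ ε * (2 : ℝ) ^ ((m : ℝ) / 2)) :
    Tendsto (fun n : ℕ => (n : ℝ) ^ (-(1 : ℝ) / 2) *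
      (((Finset.Icc 1 n).sup fun k => ‖S k‖₊ : ℝ≥0) : ℝ)) atTop (nhds 0) := by
  refine tendsto_order.2 ⟨fun a ha => Eventually.of_forall fun n => ha.trans_le (by positivity),
    fun a ha => ?_⟩
  obtain ⟨M, hM⟩ := eventually_atTop.1 (h (a / 2) (by positivity))
  filter_upwards [eventually_ge_atTop (2 ^ M)] with n hn
  have hn0 : 0 < n := (Nat.two_pow_pos M).trans_le hn
  set m := Nat.log 2 n + 1
  have hnm : n < 2 ^ m := Nat.lt_pow_succ_log_self one_lt_two n
  have hmn : 2 ^ m ≤ 2 * n := by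
    rw [pow_succ, mul_comm]; exact Nat.mul_le_mul_left 2 (Nat.pow_log_le_self 2 hn0.ne')
  have hMm : M ≤ m := Nat.le_succ_of_le ((Nat.le_log_iff_pow_le one_lt_two hn0.ne').2 hn)
  have hsup :
      (Finset.Icc 1 n).sup (fun k => ‖S k‖₊) ≤ ⟨a / 2 * 2 ^ ((m : ℝ) / 2), by positivity⟩ :=
    Finset.sup_le fun k hk => hM m hMm k (hnm.le.trans' (Finset.mem_Icc.1 hk).2)
  have hscale : (2 : ℝ) ^ ((m : ℝ) / 2) ≤ (2 * n : ℝ) ^ (1 / 2 : ℝ) := by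
    rw [div_eq_mul_one_div (m : ℝ), Real.rpow_mul zero_le_two, Real.rpow_natCast]
    gcongr
    exact_mod_cast hmn
  calc (n : ℝ) ^ (-(1 : ℝ) / 2) * (((Finset.Icc 1 n).sup fun k => ‖S k‖₊ : ℝ≥0) : ℝ)
      ≤ (n : ℝ) ^ (-(1 : ℝ) / 2) * (a / 2 * (2 * n : ℝ) ^ (1 / 2 : ℝ)) := by
        gcongr
        exact (NNReal.coe_le_coe.2 hsup).trans (mul_le_mul_of_nonneg_left hscale (by positivity))
    _ = a / 2 * 2 ^ (1 / 2 : ℝ) := by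
        rw [Real.mul_rpow zero_le_two n.cast_nonneg, neg_div, Real.rpow_neg n.cast_nonneg]
        field_simp
    _ < a := by
        have : (2 : ℝ) ^ (1 / 2 : ℝ) < 2 := by
          conv_rhs => rw [← Real.rpow_one 2]
          exact Real.rpow_lt_rpow_of_exponent_lt one_lt_two (by norm_num)
        nlinarith

section Chebyshev

variable {Ω : Type*} [MeasurableSpace Ω] {μ : Measure Ω} {E : Type*} [NormedAddCommGroup E]
  {q : ℝ≥0∞}

theorem measure_norm_ge_le_of_eLpNorm_le {f : Ω → E} (hf : AEStronglyMeasurable f μ)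
    (hq0 : q ≠ 0) (hq_top : q ≠ ∞) {t B : ℝ} (ht : 0 < t) (hB : 0 ≤ B)
    (hfB : eLpNorm f q μ ≤ ENNReal.ofReal B) :
    μ {x | t ≤ ‖f x‖} ≤ ENNReal.ofReal ((B / t) ^ q.toReal) := by
  have hset : {x | t ≤ ‖f x‖} = {x | ENNReal.ofReal t ≤ ‖f x‖ₑ} := by
    ext x; simp [← ofReal_norm, ENNReal.ofReal_le_ofReal_iff (norm_nonneg _)]
  rw [hset]
  refine (meas_ge_le_mul_pow_eLpNorm_enorm μ hq0 hq_top hf (ENNReal.ofReal_pos.2 ht).ne'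
    (by simp)).trans ?_
  calc (ENNReal.ofReal t)⁻¹ ^ q.toReal * eLpNorm f q μ ^ q.toReal
      ≤ (ENNReal.ofReal t)⁻¹ ^ q.toReal * ENNReal.ofReal B ^ q.toReal := by gcongr
    _ = ENNReal.ofReal ((B / t) ^ q.toReal) := by
        rw [← ENNReal.ofReal_inv_of_pos ht, ← ENNReal.mul_rpow_of_nonneg _ _ ENNReal.toReal_nonneg,
          ← ENNReal.ofReal_mul (by positivity), ENNReal.ofReal_rpow_of_nonneg (by positivity)
            ENNReal.toReal_nonneg, inv_mul_eq_div]

theorem measure_biUnion_range_norm_ge_le {f : ℕ → Ω → E}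
    (hf : ∀ j, AEStronglyMeasurable (f j) μ) (hq0 : q ≠ 0) (hq_top : q ≠ ∞) {n : ℕ} {t B : ℝ}
    (ht : 0 < t) (hB : 0 ≤ B) (hfB : ∀ j, eLpNorm (f j) q μ ≤ ENNReal.ofReal B) :
    μ (⋃ j ∈ Finset.range n, {x | t ≤ ‖f j x‖}) ≤ ENNReal.ofReal (n * (B / t) ^ q.toReal) := by
  calc μ (⋃ j ∈ Finset.range n, {x | t ≤ ‖f j x‖})
      ≤ ∑ j ∈ Finset.range n, μ {x | t ≤ ‖f j x‖} := measure_biUnion_finset_le _ _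
    _ ≤ ∑ _j ∈ Finset.range n, ENNReal.ofReal ((B / t) ^ q.toReal) :=
        Finset.sum_le_sum fun j _ =>
          measure_norm_ge_le_of_eLpNorm_le (hf j) hq0 hq_top ht hB (hfB j)
    _ = ENNReal.ofReal (n * (B / t) ^ q.toReal) := by
        rw [Finset.sum_const, Finset.card_range, nsmul_eq_mul, ENNReal.ofReal_mul (by positivity),
          ENNReal.ofReal_natCast]

end Chebyshev

-- The level-`l` thresholds at scale `m` carry the factor `ρ^{m-l}`, `ρ = 2^{-dyadicRate p α}`.
def dyadicRate (p α : ℝ) : ℝ := (1 / 2 - 1 / p) * (1 - 2 * α) / 8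

theorem dyadicRate_pos {p α : ℝ} (hp : 2 < p) (hα : α < 1 / 2) : 0 < dyadicRate p α := by
  have hp' : 0 < 1 / 2 - 1 / p := sub_pos.2 (one_div_lt_one_div_of_lt two_pos hp)
  have hα' : 0 < 1 - 2 * α := by linarith
  unfold dyadicRate
  positivity

theorem two_rpow_neg_dyadicRate_lt_one {p α : ℝ} (hp : 2 < p) (hα : α < 1 / 2) :
    (2 : ℝ) ^ (-dyadicRate p α) < 1 :=
  Real.rpow_lt_one_of_one_lt_of_neg one_lt_two (neg_neg_of_pos (dyadicRate_pos hp hα))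

theorem lp_exponent_le_neg_dyadicRate {p α x y : ℝ} (hp : 2 < p) (hα0 : 0 ≤ α) (hx : 0 ≤ x)
    (hxy : x ≤ (1 / 2 - 1 / p) / 2 * y) :
    (y - x) + p * (x - y / 2 + dyadicRate p α * (y - x))
      ≤ -(dyadicRate p α * y) := by
  unfold dyadicRate
  have hs0 : 0 < 1 / 2 - 1 / p := sub_pos.2 (one_div_lt_one_div_of_lt two_pos hp)
  set s := 1 / 2 - 1 / p with hs
  have hsp : s * p = p / 2 - 1 := by rw [hs]; field_simp
  have hy : 0 ≤ y := by nlinarith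
  nlinarith [mul_nonneg hs0.le hα0, mul_nonneg (mul_nonneg hs0.le hα0) hy,
    mul_nonneg (mul_nonneg hs0.le hα0) hx, mul_le_mul_of_nonneg_left hxy (by linarith : 0 ≤ p - 1)]

theorem l2_exponent_le_neg_dyadicRate {p α x y : ℝ} (hp : 2 < p) (hα : α < 1 / 2) (hx : 0 ≤ x)
    (hxy : x ≤ y) (hyx : (1 / 2 - 1 / p) / 2 * y ≤ x) :
    (y - x) + 2 * (α * x - y / 2 + dyadicRate p α * (y - x))
      ≤ -(dyadicRate p α * y) := by
  unfold dyadicRate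
  have hs0 : 0 < 1 / 2 - 1 / p := sub_pos.2 (one_div_lt_one_div_of_lt two_pos hp)
  have hu : 0 < 1 - 2 * α := by linarith
  nlinarith [mul_le_mul_of_nonneg_left hyx hu.le, mul_nonneg (mul_nonneg hs0.le hu.le) hx,
    mul_nonneg (mul_nonneg hs0.le hu.le) (hx.trans hxy)]

theorem natCast_two_pow_sub_mul_rpow_le {b c q u η : ℝ} {l m : ℕ} (hb : 0 ≤ b) (hc : 0 < c)
    (hlm : l ≤ m) (hexp : ((m : ℝ) - l) + q * (u - m / 2 + η * (m - l)) ≤ -(η * m)) :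
    ((2 ^ (m - l) : ℕ) : ℝ) * (b * 2 ^ u / (c * 2 ^ ((m : ℝ) / 2) * (2 ^ (-η)) ^ (m - l))) ^ q
      ≤ (b / c) ^ q * ((2 : ℝ) ^ (-η)) ^ m := by
  have h2 : (0 : ℝ) < 2 := two_pos
  have hpow : ∀ (k : ℕ) (r : ℝ), ((2 : ℝ) ^ r) ^ k = 2 ^ (r * k) := fun k r => by
    rw [← Real.rpow_natCast, ← Real.rpow_mul h2.le]
  have hratio : b * 2 ^ u / (c * 2 ^ ((m : ℝ) / 2) * (2 ^ (-η)) ^ (m - l))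
      = b / c * 2 ^ (u - m / 2 + η * (m - l)) := by
    rw [hpow, Nat.cast_sub hlm, show u - m / 2 + η * (m - l) = u - m / 2 - -η * (m - l) by ring,
      Real.rpow_sub h2, Real.rpow_sub h2]
    field_simp
  rw [hratio, Real.mul_rpow (div_nonneg hb hc.le) (by positivity), ← Real.rpow_mul h2.le, hpow,
    Nat.cast_pow, Nat.cast_ofNat, ← Real.rpow_natCast, Nat.cast_sub hlm, mul_left_comm,
    ← Real.rpow_add h2]
  gcongr
  · exact one_le_two
  · linarith

section DyadicBlocks

variable {Ω : Type*} [MeasurableSpace Ω] {μ : Measure Ω} {E : Type*} [NormedAddCommGroup E]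
  {D : ℕ → ℕ → Ω → E} {p α G C c : ℝ}

theorem measure_biUnion_dyadic_block_ge_le (hD : ∀ l j, AEStronglyMeasurable (D l j) μ)
    (hp : 2 < p) (hα0 : 0 ≤ α) (hα : α < 1 / 2) (hG : 0 ≤ G) (hC : 0 ≤ C) (hc : 0 < c)
    (hDp : ∀ l j, eLpNorm (D l j) (ENNReal.ofReal p) μ ≤ ENNReal.ofReal (G * 2 ^ (l : ℝ)))
    (hD2 : ∀ l j, eLpNorm (D l j) 2 μ ≤ ENNReal.ofReal (C * 2 ^ (α * l))) {l m : ℕ}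
    (hlm : l ≤ m) :
    μ (⋃ j ∈ Finset.range (2 ^ (m - l)),
        {x | c * 2 ^ ((m : ℝ) / 2) * ((2 : ℝ) ^ (-dyadicRate p α)) ^ (m - l) ≤ ‖D l j x‖})
      ≤ ENNReal.ofReal (((G / c) ^ p + (C / c) ^ (2 : ℝ)) * ((2 : ℝ) ^ (-dyadicRate p α)) ^ m) := by
  have ht : 0 < c * 2 ^ ((m : ℝ) / 2) * ((2 : ℝ) ^ (-dyadicRate p α)) ^ (m - l) := by positivity
  have hl : (0 : ℝ) ≤ l := l.cast_nonneg
  have hlm' : (l : ℝ) ≤ m := Nat.cast_le.2 hlm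
  -- Below level `(1/2 - 1/p) m / 2` the `Lᵖ` bound wins, above it the `L²` bound.
  rcases le_total (l : ℝ) ((1 / 2 - 1 / p) / 2 * m) with hsmall | hlarge
  · have hp0 : ENNReal.ofReal p ≠ 0 := by simp; linarith
    refine (measure_biUnion_range_norm_ge_le (fun j => hD l j) hp0 ENNReal.ofReal_ne_top ht
      (by positivity) (hDp l)).trans (ENNReal.ofReal_le_ofReal ?_)
    rw [ENNReal.toReal_ofReal (by linarith)]
    refine (natCast_two_pow_sub_mul_rpow_le hG hc hlm ?_).trans
      (mul_le_mul_of_nonneg_right (le_add_of_nonneg_right (by positivity)) (by positivity))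
    linarith [lp_exponent_le_neg_dyadicRate (α := α) hp hα0 hl hsmall]
  · refine (measure_biUnion_range_norm_ge_le (fun j => hD l j) two_ne_zero ENNReal.ofNat_ne_top ht
      (by positivity) (hD2 l)).trans (ENNReal.ofReal_le_ofReal ?_)
    rw [ENNReal.toReal_ofNat]
    refine (natCast_two_pow_sub_mul_rpow_le hC hc hlm ?_).trans
      (mul_le_mul_of_nonneg_right (le_add_of_nonneg_left (by positivity)) (by positivity))
    linarith [l2_exponent_le_neg_dyadicRate hp hα hl hlm' hlarge]

theorem ae_eventually_norm_dyadic_block_lt (hD : ∀ l j, AEStronglyMeasurable (D l j) μ)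
    (hp : 2 < p) (hα0 : 0 ≤ α) (hα : α < 1 / 2) (hG : 0 ≤ G) (hC : 0 ≤ C) (hc : 0 < c)
    (hDp : ∀ l j, eLpNorm (D l j) (ENNReal.ofReal p) μ ≤ ENNReal.ofReal (G * 2 ^ (l : ℝ)))
    (hD2 : ∀ l j, eLpNorm (D l j) 2 μ ≤ ENNReal.ofReal (C * 2 ^ (α * l))) :
    ∀ᵐ x ∂μ, ∀ᶠ m in atTop, ∀ l ≤ m, ∀ j < 2 ^ (m - l),
      ‖D l j x‖ < c * 2 ^ ((m : ℝ) / 2) * ((2 : ℝ) ^ (-dyadicRate p α)) ^ (m - l) := by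
  set ρ := (2 : ℝ) ^ (-dyadicRate p α)
  have hρ0 : 0 < ρ := by positivity
  have hρ1 : ρ < 1 := two_rpow_neg_dyadicRate_lt_one hp hα
  set A := (G / c) ^ p + (C / c) ^ (2 : ℝ)
  set bad : ℕ → Set Ω := fun m => ⋃ l ∈ Finset.range (m + 1), ⋃ j ∈ Finset.range (2 ^ (m - l)),
    {x | c * 2 ^ ((m : ℝ) / 2) * ρ ^ (m - l) ≤ ‖D l j x‖}
  have hbad : ∀ m, μ (bad m) ≤ ENNReal.ofReal ((m + 1) * (A * ρ ^ m)) := fun m => by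
    refine (measure_biUnion_finset_le _ _).trans ?_
    calc ∑ l ∈ Finset.range (m + 1), μ (⋃ j ∈ Finset.range (2 ^ (m - l)),
          {x | c * 2 ^ ((m : ℝ) / 2) * ρ ^ (m - l) ≤ ‖D l j x‖})
        ≤ ∑ _l ∈ Finset.range (m + 1), ENNReal.ofReal (A * ρ ^ m) :=
          Finset.sum_le_sum fun l hl => measure_biUnion_dyadic_block_ge_le hD hp hα0 hα hG hC hc
            hDp hD2 (Nat.lt_succ_iff.1 (Finset.mem_range.1 hl))
      _ = ENNReal.ofReal ((m + 1) * (A * ρ ^ m)) := by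
          rw [Finset.sum_const, Finset.card_range, nsmul_eq_mul, ← ENNReal.ofReal_natCast,
            ← ENNReal.ofReal_mul (by positivity)]
          push_cast; rfl
  have hsummable : Summable fun m : ℕ => ((m : ℝ) + 1) * (A * ρ ^ m) := by
    have h := (summable_pow_mul_geometric_of_norm_lt_one 1
      (by rwa [Real.norm_of_nonneg hρ0.le])).add (summable_geometric_of_lt_one hρ0.le hρ1)
    simpa only [pow_one, add_mul, one_mul, mul_left_comm _ A, ← mul_add] using h.mul_left A
  have hsum : ∑' m, μ (bad m) ≠ ∞ := by
    refine ne_top_of_le_ne_top ?_ (ENNReal.tsum_le_tsum hbad)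
    rw [← ENNReal.ofReal_tsum_of_nonneg (fun m => by positivity) hsummable]
    exact ENNReal.ofReal_ne_top
  filter_upwards [ae_eventually_notMem hsum] with x hx
  filter_upwards [hx] with m hm l hl j hj
  by_contra! hge
  exact hm (Set.mem_biUnion (Finset.mem_range.2 (Nat.lt_succ_of_le hl))
    (Set.mem_biUnion (Finset.mem_range.2 hj) hge))

end DyadicBlocks

theorem sum_range_pow_sub_le_inv_one_sub {ρ : ℝ} (hρ0 : 0 ≤ ρ) (hρ1 : ρ < 1) (m : ℕ) :
    ∑ l ∈ Finset.range (m + 1), ρ ^ (m - l) ≤ (1 - ρ)⁻¹ := by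
  have hreflect := Finset.sum_range_reflect (fun i => ρ ^ i) (m + 1)
  rw [Nat.add_sub_cancel] at hreflect
  have hgeom := geom_sum_Ico_le_of_lt_one (m := 0) (n := m + 1) hρ0 hρ1
  rw [← Finset.range_eq_Ico, pow_zero, one_div] at hgeom
  exact hreflect.trans_le hgeom

theorem ae_eventually_norm_tres_le {𝒳 : Type*} [MeasurableSpace 𝒳] {E : Type*}
    [NormedAddCommGroup E] [NormedSpace ℝ E] {Q : Kernel 𝒳 𝒳} [IsMarkovKernel Q]
    {π : Measure 𝒳} [IsFiniteMeasure π] (hinv : Kernel.Invariant Q π) {g : 𝒳 → E}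
    (hgm : StronglyMeasurable g) {p α C : ℝ} (hp : 2 < p) (hα0 : 0 ≤ α) (hα : α < 1 / 2)
    (hg : MemLp g (ENNReal.ofReal p) π)
    (hC : ∀ n : ℕ, 1 ≤ n → eLpNorm (Tres Q g n) 2 π ≤ ENNReal.ofReal (C * (n : ℝ) ^ α))
    {ε : ℝ} (hε : 0 < ε) :
    ∀ᵐ x ∂π, ∀ᶠ m : ℕ in atTop, ∀ k ≤ 2 ^ m, ‖Tres Q g k x‖ ≤ ε * 2 ^ ((m : ℝ) / 2) := by
  set ρ := (2 : ℝ) ^ (-dyadicRate p α)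
  have hρ0 : 0 < ρ := by positivity
  have hρ1 : ρ < 1 := two_rpow_neg_dyadicRate_lt_one hp hα
  have hp1 : 1 ≤ ENNReal.ofReal p := ENNReal.one_le_ofReal.2 (by linarith)
  have hgi : Integrable g π := memLp_one_iff_integrable.1 (hg.mono_exponent hp1)
  have hpow : ∀ l : ℕ, ((2 ^ l : ℕ) : ℝ) = 2 ^ (l : ℝ) := fun l => by
    rw [Nat.cast_pow, Nat.cast_ofNat, Real.rpow_natCast]
  -- `Tres Q (Q^[j 2^l] g) (2^l)` is the dyadic block `Σ_{j 2^l ≤ i < (j+1) 2^l} Q^i g`.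
  have hDp : ∀ l j : ℕ, eLpNorm (Tres Q ((kerOp Q)^[j * 2 ^ l] g) (2 ^ l)) (ENNReal.ofReal p) π
      ≤ ENNReal.ofReal ((eLpNorm g (ENNReal.ofReal p) π).toReal * 2 ^ (l : ℝ)) := fun l j => by
    refine (eLpNorm_tres_iterate_kerOp_le_mul hinv hgm hp1 ENNReal.ofReal_ne_top _ _).trans_eq ?_
    rw [mul_comm, ENNReal.ofReal_mul (by positivity), ← hpow, ENNReal.ofReal_natCast,
      ENNReal.ofReal_toReal hg.eLpNorm_ne_top]
  have hD2 : ∀ l j : ℕ, eLpNorm (Tres Q ((kerOp Q)^[j * 2 ^ l] g) (2 ^ l)) 2 π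
      ≤ ENNReal.ofReal (max C 0 * 2 ^ (α * l)) := fun l j => by
    refine (eLpNorm_tres_iterate_kerOp_le hinv hgm hgi one_le_two ENNReal.ofNat_ne_top _ _).trans
      ((hC _ Nat.one_le_two_pow).trans (ENNReal.ofReal_le_ofReal ?_))
    rw [hpow, ← Real.rpow_mul zero_le_two, mul_comm (l : ℝ)]
    gcongr
    exact le_max_left C 0
  have hblocks := ae_eventually_norm_dyadic_block_lt
    (fun l j => (hgm.iterate_kerOp _).tres _ |>.aestronglyMeasurable) hp hα0 hα
    ENNReal.toReal_nonneg (le_max_right C 0) (mul_pos hε (sub_pos.2 hρ1)) hDp hD2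
  filter_upwards [hblocks] with x hx
  filter_upwards [hx] with m hm k hk
  refine (norm_le_sum_of_norm_dyadic_increment_le m (S := fun k => Tres Q g k x)
    (t := fun l => ε * (1 - ρ) * 2 ^ ((m : ℝ) / 2) * ρ ^ (m - l)) (by simp [Tres])
    (fun l hl j hj => ?_) k hk).trans ?_
  · rw [add_mul, one_mul, tres_add, add_sub_cancel_left]
    exact (hm l hl j hj).le
  · rw [← Finset.mul_sum]
    calc _ ≤ ε * (1 - ρ) * 2 ^ ((m : ℝ) / 2) * (1 - ρ)⁻¹ := by
          gcongr
          exact sum_range_pow_sub_le_inv_one_sub hρ0.le hρ1 m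
      _ = ε * 2 ^ ((m : ℝ) / 2) := by field_simp [(sub_pos.2 hρ1).ne']

theorem stmt2_general {𝒳 : Type*} [MeasurableSpace 𝒳] (d : ℕ)
    (Q : Kernel 𝒳 𝒳) [IsMarkovKernel Q]
    (π : Measure 𝒳) [IsProbabilityMeasure π] (hinv : Kernel.Invariant Q π)
    (g : 𝒳 → EuclideanSpace ℝ (Fin d)) (hgm : StronglyMeasurable g)
    (p α C : ℝ) (hp : 2 < p) (hα0 : 0 < α) (hα : α < 1 / 2)
    (hg : MemLp g (ENNReal.ofReal p) π)
    (hC : ∀ n : ℕ, 1 ≤ n →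
      eLpNorm (Tres Q g n) 2 π ≤ ENNReal.ofReal (C * (n : ℝ) ^ α)) :
    ∀ᵐ x ∂π, Tendsto
      (fun n : ℕ => (n : ℝ) ^ (-(1 : ℝ) / 2) *
        (((Finset.Icc 1 n).sup fun k => ‖Tres Q g k x‖₊ : ℝ≥0) : ℝ))
      atTop (nhds 0) := by
  have hdyadic : ∀ r : ℕ, ∀ᵐ x ∂π, ∀ᶠ m : ℕ in atTop, ∀ k ≤ 2 ^ m,
      ‖Tres Q g k x‖ ≤ 1 / (r + 1) * 2 ^ ((m : ℝ) / 2) := fun r =>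
    ae_eventually_norm_tres_le hinv hgm hp hα0.le hα hg hC (by positivity)
  filter_upwards [ae_all_iff.2 hdyadic] with x hx
  refine tendsto_rpow_neg_half_mul_sup_nnnorm_of_dyadic fun ε hε => ?_
  obtain ⟨r, hr⟩ := exists_nat_one_div_lt hε
  filter_upwards [hx r] with m hm k hk
  exact (hm k hk).trans (by gcongr)

/-- if `g ∈ L^p(π)` for some `p > 2`, `∫ g dπ = 0`, and
`‖T_n(g,Q)‖₂ ≤ C n^α` for all `n ≥ 1` with some `α ∈ (0, 1/2)`, then for `π`-a.e. `x`,
`n^{-1/2} max_{1 ≤ k ≤ n} |T_k(g,Q)(x)| → 0` as `n → ∞`. -/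
theorem stmt2 {𝒳 : Type*} [MeasurableSpace 𝒳] (d : ℕ)
    (Q : Kernel 𝒳 𝒳) [IsMarkovKernel Q]
    (π : Measure 𝒳) [IsProbabilityMeasure π] (hinv : Kernel.Invariant Q π)
    (g : 𝒳 → EuclideanSpace ℝ (Fin d)) (hgm : StronglyMeasurable g)
    (p α C : ℝ) (hp : 2 < p) (hα0 : 0 < α) (hα : α < 1 / 2)
    (hg : MemLp g (ENNReal.ofReal p) π) (hmean : ∫ x, g x ∂π = 0)
    (hC : ∀ n : ℕ, 1 ≤ n →
      eLpNorm (Tres Q g n) 2 π ≤ ENNReal.ofReal (C * (n : ℝ) ^ α)) :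
    ∀ᵐ x ∂π, Tendsto
      (fun n : ℕ => (n : ℝ) ^ (-(1 : ℝ) / 2) *
        (((Finset.Icc 1 n).sup fun k => ‖Tres Q g k x‖₊ : ℝ≥0) : ℝ))
      atTop (nhds 0) :=
  stmt2_general d Q π hinv g hgm p α C hp hα0 hα hg hC
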